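/- Let H be the free abelian group on generators h_{i₁i₂i₃i₄i₅} indexed by permutations (i₁,...,i₅) of (1,...,5), and let P be the subgroup generated by all elements h_{i₁i₂i₃i₄i₅} + h_{i₂i₁i₃i₄i₅}, h_{i₁i₂i₃i₄i₅} + h_{i₁i₂i₃i₅i₄}, h_{i₁i₂i₃i₄i₅} + h_{i₂i₃i₁i₄i₅} + h_{i₃i₁i₂i₄i₅}, h_{i₁i₂i₃i₄i₅} + h_{i₁i₂i₄i₃i₅}, and h_{i₁i₂i₃i₄i₅} + h_{i₁i₄i₃i₂i₅}. Then h_{12345} ∉ P. -/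

import Mathlib

noncomputable section

/-- `H`: the free abelian group on generators `h_{i₁i₂i₃i₄i₅}` indexed by permutations
of `{1,…,5}` (here `Equiv.Perm (Fin 5)`, where `σ k = i_{k+1}`). -/
abbrev H : Type := Equiv.Perm (Fin 5) →₀ ℤ

/-- The generator `h_{i₁i₂i₃i₄i₅}` corresponding to a permutation. -/
def h (σ : Equiv.Perm (Fin 5)) : H := Finsupp.single σ 1

/-- The 3-cycle `(0 1 2)` on positions, used to express `h_{i₂i₃i₁i₄i₅}` as `h (σ * c)`. -/
def c : Equiv.Perm (Fin 5) := Equiv.swap 0 1 * Equiv.swap 1 2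

/-- `P`: the subgroup of `H` generated by all `h_{i₁i₂i₃i₄i₅} + h_{i₂i₁i₃i₄i₅}`,
`h_{i₁i₂i₃i₄i₅} + h_{i₁i₂i₃i₅i₄}`, `h_{i₁i₂i₃i₄i₅} + h_{i₂i₃i₁i₄i₅} + h_{i₃i₁i₂i₄i₅}`,
`h_{i₁i₂i₃i₄i₅} + h_{i₁i₂i₄i₃i₅}` and `h_{i₁i₂i₃i₄i₅} + h_{i₁i₄i₃i₂i₅}`. -/
def P : AddSubgroup H := AddSubgroup.closure
  ({y | ∃ σ, y = h σ + h (σ * Equiv.swap 0 1)} ∪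
   {y | ∃ σ, y = h σ + h (σ * Equiv.swap 3 4)} ∪
   {y | ∃ σ, y = h σ + h (σ * c) + h (σ * c * c)} ∪
   {y | ∃ σ, y = h σ + h (σ * Equiv.swap 2 3)} ∪
   {y | ∃ σ, y = h σ + h (σ * Equiv.swap 1 3)})

/-!
Every generator of `P` lies in the kernel of the sign map `h σ ↦ sgn σ` reduced mod 3:
a sum over a transposition coset is `sgn σ - sgn σ = 0`, and a sum over a coset of the
even 3-cycle `c` is `3 sgn σ`. The sign map sends `h 1` to `1 ≠ 0` in `ZMod 3`.
-/

namespace Equiv.Perm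

variable {α : Type*} [DecidableEq α] [Fintype α]

def signModThree : (Perm α →₀ ℤ) →+ ZMod 3 :=
  (Int.castAddHom (ZMod 3)).comp (Finsupp.liftAddHom fun σ ↦ AddMonoidHom.mulRight (sign σ : ℤ))

theorem signModThree_single_one (σ : Perm α) :
    signModThree (Finsupp.single σ 1) = ((sign σ : ℤ) : ZMod 3) := by
  simp [signModThree]

theorem signModThree_single_add_single_mul_swap (σ : Perm α) {i j : α} (hij : i ≠ j) :
    signModThree (Finsupp.single σ 1 + Finsupp.single (σ * swap i j) 1) = 0 := by
  simp [signModThree_single_one, sign_swap hij]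

theorem signModThree_single_add_single_mul_add_single_mul_mul {τ : Perm α} (hτ : sign τ = 1)
    (σ : Perm α) :
    signModThree (Finsupp.single σ 1 + Finsupp.single (σ * τ) 1 +
      Finsupp.single (σ * τ * τ) 1) = 0 := by
  have triple_eq_zero : ∀ x : ZMod 3, x + x + x = 0 := by decide
  simp only [map_add, signModThree_single_one, sign_mul, hτ, mul_one]
  exact triple_eq_zero _

end Equiv.Perm

open Equiv Perm

theorem P_le_ker_signModThree : P ≤ signModThree.ker := by
  rw [P, AddSubgroup.closure_le]
  rintro y ((((⟨σ, rfl⟩ | ⟨σ, rfl⟩) | ⟨σ, rfl⟩) | ⟨σ, rfl⟩) | ⟨σ, rfl⟩)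
  · exact signModThree_single_add_single_mul_swap σ (by decide)
  · exact signModThree_single_add_single_mul_swap σ (by decide)
  · exact signModThree_single_add_single_mul_add_single_mul_mul (by decide) σ
  · exact signModThree_single_add_single_mul_swap σ (by decide)
  · exact signModThree_single_add_single_mul_swap σ (by decide)

theorem stmt12 : h 1 ∉ P := by
  intro hP
  have hker : signModThree (h 1) = 0 := P_le_ker_signModThree hP
  rw [h, signModThree_single_one, Perm.sign_one] at hker
  exact absurd hker (by decide)
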